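/- Every Galkin quandle is self-dual: the dual of G(A, c₁, c₂) is G(A, c₂, c₁), and the map f(x,a) = (-x, a) is a quandle isomorphism from G(A, c₁, c₂) to its dual. -/

import Mathlib

/-- The function `μ` with `μ(0) = 2`, `μ(1) = μ(2) = -1`. -/
def galkinMu : ZMod 3 → ℤ := fun x => if x = 0 then 2 else -1

/-- The function `τ` with `τ(0) = 0`, `τ(1) = c₁`, `τ(2) = c₂`. -/
def galkinTau {A : Type*} [AddCommGroup A] (c₁ c₂ : A) : ZMod 3 → A :=
  fun x => if x = 1 then c₁ else if x = 2 then c₂ else 0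

/-- The Galkin quandle operation on `ZMod 3 × A` for the quandle `G(A, c₁, c₂)`. -/
def galkinOp {A : Type*} [AddCommGroup A] (c₁ c₂ : A) (p q : ZMod 3 × A) : ZMod 3 × A :=
  (2 * q.1 - p.1, -p.2 + galkinMu (p.1 - q.1) • q.2 + galkinTau c₁ c₂ (p.1 - q.1))

/-! μ and τ only see the difference `x - y` of the `ZMod 3`-coordinates. Negating that
difference fixes μ and swaps the two constants of τ, and both `(x,a) * (y,b)` (first coordinate
`2y - x`) and `(x, a) ↦ (-x, a)` negate it. Hence `R_q` of `G(A, c₂, c₁)` inverts `R_q` of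
`G(A, c₁, c₂)`, and `(x, a) ↦ (-x, a)` intertwines the two operations. -/

section

variable {A : Type*} [AddCommGroup A]

theorem galkinMu_neg (x : ZMod 3) : galkinMu (-x) = galkinMu x := by
  simp only [galkinMu, neg_eq_zero]

theorem galkinTau_neg (c₁ c₂ : A) (x : ZMod 3) : galkinTau c₁ c₂ (-x) = galkinTau c₂ c₁ x := by
  fin_cases x <;> rfl

theorem galkinOp_galkinOp_swap (c₁ c₂ : A) (p q : ZMod 3 × A) :
    galkinOp c₁ c₂ (galkinOp c₂ c₁ p q) q = p := by
  obtain ⟨x, a⟩ := p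
  obtain ⟨y, b⟩ := q
  have hdiff : 2 * y - x - y = -(x - y) := by ring
  simp only [galkinOp, hdiff, galkinMu_neg, galkinTau_neg, Prod.mk.injEq]
  constructor
  · ring
  · abel

theorem neg_fst_galkinOp (c₁ c₂ : A) (p q : ZMod 3 × A) :
    ((-(galkinOp c₁ c₂ p q).1, (galkinOp c₁ c₂ p q).2) : ZMod 3 × A) =
      galkinOp c₂ c₁ (-p.1, p.2) (-q.1, q.2) := by
  have hdiff : -p.1 - -q.1 = -(p.1 - q.1) := by ring
  simp only [galkinOp, hdiff, galkinMu_neg, galkinTau_neg, Prod.mk.injEq]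
  exact ⟨by ring, trivial⟩

end

theorem stmt_15 {A : Type*} [AddCommGroup A] (c₁ c₂ : A) :
    (∀ p q : ZMod 3 × A, galkinOp c₁ c₂ (galkinOp c₂ c₁ p q) q = p) ∧
    Function.Bijective (fun p : ZMod 3 × A => ((-p.1, p.2) : ZMod 3 × A)) ∧
    (∀ p q : ZMod 3 × A,
      ((-(galkinOp c₁ c₂ p q).1, (galkinOp c₁ c₂ p q).2) : ZMod 3 × A) =
        galkinOp c₂ c₁ (-p.1, p.2) (-q.1, q.2)) := by
  have hinvolutive : Function.Involutive (fun p : ZMod 3 × A => ((-p.1, p.2) : ZMod 3 × A)) :=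
    fun p => by simp
  exact ⟨galkinOp_galkinOp_swap c₁ c₂, hinvolutive.bijective, neg_fst_galkinOp c₁ c₂⟩
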